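/- Let π̆: S̆ → S be a covering map between locally compact Hausdorff spaces, let f be a homeomorphism of S and f̆ a homeomorphism of S̆ with π̆ ∘ f̆ = f ∘ π̆. If f̆ has a topological horseshoe, then f has a topological horseshoe. -/

import Mathlib

open Filter Topology Set

noncomputable section

/-- Group structure on the group of self-homeomorphisms of a topological space,
so that `f ^ n` denotes the `n`-th iterate (with `n : ℕ` or `n : ℤ`). -/
instance Homeomorph.instGroupSelf {X : Type*} [TopologicalSpace X] : Group (X ≃ₜ X) where
  mul f g := g.trans f
  one := Homeomorph.refl X
  inv := Homeomorph.symm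
  mul_assoc f g h := Homeomorph.ext fun _ => rfl
  one_mul f := Homeomorph.ext fun _ => rfl
  mul_one f := Homeomorph.ext fun _ => rfl
  inv_mul_cancel f := Homeomorph.ext fun x => f.symm_apply_apply x

/-- The two-torus `T² = ℝ²/ℤ²`. -/
abbrev Torus : Type := AddCircle (1 : ℝ) × AddCircle (1 : ℝ)

/-- The vertical annulus `A = (ℝ/ℤ) × ℝ`. -/
abbrev VertAnnulus : Type := AddCircle (1 : ℝ) × ℝ

/-- The canonical covering projection `ℝ² → T²`. -/
def torusProj : ℝ × ℝ → Torus :=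
  fun p => ((p.1 : AddCircle (1 : ℝ)), (p.2 : AddCircle (1 : ℝ)))

/-- The covering projection from the vertical annulus to the torus. -/
def annProj : VertAnnulus → Torus := fun p => (p.1, (p.2 : AddCircle (1 : ℝ)))

/-- A homeomorphism is (topologically) transitive if it has a dense orbit. -/
def IsTransitive {X : Type*} [TopologicalSpace X] (f : X ≃ₜ X) : Prop :=
  ∃ z : X, Dense (Set.range fun n : ℤ => (f ^ n) z)

/-- `g` and `h` are isotopic: there is a continuous path of homeomorphisms
joining `h` (at time 0) to `g` (at time 1). -/
def Isotopic {X : Type*} [TopologicalSpace X] (g h : X → X) : Prop :=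
  ∃ H : ℝ → X → X, Continuous (fun p : ℝ × X => H p.1 p.2) ∧
    (∀ t : ℝ, ∃ e : X ≃ₜ X, H t = ⇑e) ∧ H 0 = h ∧ H 1 = g

/-- The Bernoulli shift on `Σ = {0,…,r−1}^ℤ`. -/
def bernoulliShift (r : ℕ) : (ℤ → Fin r) → (ℤ → Fin r) := fun s i => s (i + 1)

/-- `Δ` is a topological horseshoe for the homeomorphism `f`. -/
def IsTopologicalHorseshoe {X : Type*} [TopologicalSpace X] (f : X ≃ₜ X) (Δ : Set X) : Prop :=
  IsCompact Δ ∧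
  ∃ q : ℕ, 1 ≤ q ∧ ⇑(f ^ q) '' Δ = Δ ∧
    ∃ (Y : Type) (_ : TopologicalSpace Y) (_ : CompactSpace Y) (_ : T2Space Y)
      (g : Y → Y) (r : ℕ) (π₁ : Y → X) (π₂ : Y → (ℤ → Fin r)),
      2 ≤ r ∧ Continuous g ∧
      Continuous π₁ ∧ Set.range π₁ = Δ ∧ (∀ y, π₁ (g y) = (f ^ q) (π₁ y)) ∧
      (∃ B : ℕ, ∀ x : X, (π₁ ⁻¹' {x}).Finite ∧ (π₁ ⁻¹' {x}).ncard ≤ B) ∧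
      Continuous π₂ ∧ Function.Surjective π₂ ∧
      (∀ y, π₂ (g y) = bernoulliShift r (π₂ y)) ∧
      (∀ (n : ℕ) (s : ℤ → Fin r), (bernoulliShift r)^[n] s = s →
        ∃ y : Y, π₂ y = s ∧ g^[n] y = y)

/-- `f` has a topological horseshoe. -/
def HasTopologicalHorseshoe {X : Type*} [TopologicalSpace X] (f : X ≃ₜ X) : Prop :=
  ∃ Δ : Set X, IsTopologicalHorseshoe f Δ

/-- The ω-limit set `ω_f(z) = ⋂_{k≥0} closure {f^n(z) : n ≥ k}`. -/
def omegaLimitOf {X : Type*} [TopologicalSpace X] (f : X → X) (z : X) : Set X :=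
  ⋂ k : ℕ, closure ((fun n : ℕ => f^[n] z) '' Set.Ici k)

/-- The α-limit set `α_f(z) = ⋂_{k≤0} closure {f^n(z) : n ≤ k}` of a homeomorphism,
i.e. the ω-limit set of the inverse homeomorphism. -/
def alphaLimitOf {X : Type*} [TopologicalSpace X] (f : X ≃ₜ X) (z : X) : Set X :=
  omegaLimitOf (⇑f.symm) z

/-- `G` is a lift of the torus homeomorphism `g` to the plane. -/
def IsLiftR2 (g : Torus ≃ₜ Torus) (G : (ℝ × ℝ) ≃ₜ (ℝ × ℝ)) : Prop :=
  ∀ p : ℝ × ℝ, torusProj (G p) = g (torusProj p)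

/-- `H` is a lift of the torus homeomorphism `g` to the vertical annulus. -/
def IsLiftAnn (g : Torus ≃ₜ Torus) (H : VertAnnulus ≃ₜ VertAnnulus) : Prop :=
  ∀ p : VertAnnulus, annProj (H p) = g (annProj p)

/-- The Misiurewicz–Ziemian rotation set of a lift `G` of a torus homeomorphism:
all limits of sequences `(G^{n_k}(z_k) − z_k)/n_k` with `n_k → ∞`. -/
def rotSet (G : (ℝ × ℝ) ≃ₜ (ℝ × ℝ)) : Set (ℝ × ℝ) :=
  {v | ∃ (n : ℕ → ℕ) (z : ℕ → ℝ × ℝ), StrictMono n ∧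
    Filter.Tendsto (fun k => ((n k : ℝ))⁻¹ • ((G ^ (n k)) (z k) - z k))
      Filter.atTop (nhds v)}

/-- A set is a non-degenerate line segment with rational slope: it is a segment with
distinct endpoints whose direction is a real multiple of a nonzero integer vector. -/
def IsRationalSlopeSegment (ρ : Set (ℝ × ℝ)) : Prop :=
  ∃ a b : ℝ × ℝ, a ≠ b ∧ ρ = segment ℝ a b ∧
    ∃ v : ℤ × ℤ, v ≠ (0, 0) ∧ ∃ t : ℝ, b - a = t • (((v.1 : ℝ), (v.2 : ℝ)) : ℝ × ℝ)

/-- A set is a non-degenerate horizontal segment (direction `±(1,0)`). -/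
def IsHorizontalSegment (ρ : Set (ℝ × ℝ)) : Prop :=
  ∃ a b : ℝ × ℝ, a ≠ b ∧ ρ = segment ℝ a b ∧ a.2 = b.2

/-- The linear torus map induced by an integer matrix. -/
def matrixTorusMap (A : Matrix (Fin 2) (Fin 2) ℤ) : Torus → Torus :=
  fun p => (A 0 0 • p.1 + A 0 1 • p.2, A 1 0 • p.1 + A 1 1 • p.2)

/-- The linear planar map induced by an integer matrix. -/
def matMap (A : Matrix (Fin 2) (Fin 2) ℤ) : ℝ × ℝ → ℝ × ℝ :=
  fun p => ((A 0 0 : ℝ) * p.1 + (A 0 1 : ℝ) * p.2, (A 1 0 : ℝ) * p.1 + (A 1 1 : ℝ) * p.2)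

/-- `g` is isotopic to a Dehn twist: it is isotopic to the linear map induced by a matrix
`A ∈ GL(2,ℤ)` conjugate (in GL(2,ℤ)) to `[[1, m], [0, 1]]` for some `m ≠ 0`. -/
def IsotopicToDehnTwist (g : Torus ≃ₜ Torus) : Prop :=
  ∃ (m : ℤ) (A P : Matrix (Fin 2) (Fin 2) ℤ), m ≠ 0 ∧ IsUnit A.det ∧ IsUnit P.det ∧
    A * P = P * !![1, m; 0, 1] ∧ Isotopic (⇑g) (matrixTorusMap A)

/-- The vertical rotation set of an annulus homeomorphism `H`:
`ρ_V(H) = ⋂_{k≥1} closure ( ⋃_{n≥k} { pr₂(Hⁿ(z) − z)/n : z ∈ A } )`. -/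
def vertRotSet (H : VertAnnulus ≃ₜ VertAnnulus) : Set ℝ :=
  ⋂ k : ℕ, closure (⋃ n : ℕ, ⋃ _ : k + 1 ≤ n,
    {x : ℝ | ∃ z : VertAnnulus, x = (((H ^ n) z).2 - z.2) / n})

/-- `z` is a non-wandering point of `f`. -/
def IsNonWanderingPt {X : Type*} [TopologicalSpace X] (f : X → X) (z : X) : Prop :=
  ∀ U ∈ 𝓝 z, ∃ n : ℕ, 1 ≤ n ∧ (f^[n] '' U ∩ U).Nonempty

/-- The Euclidean inner product on `ℝ²`. -/
def dot2 (u v : ℝ × ℝ) : ℝ := u.1 * v.1 + u.2 * v.2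

/-- The Euclidean normalization of a vector of `ℝ²`. -/
def normalize2 (u : ℝ × ℝ) : ℝ × ℝ := (Real.sqrt (u.1 ^ 2 + u.2 ^ 2))⁻¹ • u

/-- There is a Birkhoff connection from `z₁` to `z₂` for `f`. -/
def BirkhoffConnection {X : Type*} [TopologicalSpace X] (f : X → X) (z₁ z₂ : X) : Prop :=
  ∀ W₁ ∈ 𝓝 z₁, ∀ W₂ ∈ 𝓝 z₂, ∃ n : ℕ, 1 ≤ n ∧ (W₁ ∩ f^[n] ⁻¹' W₂).Nonempty

/-- `c : ℤ/pℤ → X` is a Birkhoff cycle for `f`. -/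
def IsBirkhoffCycle {X : Type*} [TopologicalSpace X] (f : X → X) {p : ℕ} (c : ZMod p → X) :
    Prop :=
  0 < p ∧ ∀ i : ZMod p, BirkhoffConnection f (c i) (c (i + 1))

theorem Homeomorph.coe_pow_eq_iterate {X : Type*} [TopologicalSpace X] (f : X ≃ₜ X) (n : ℕ) :
    ⇑(f ^ n) = (⇑f)^[n] := by
  induction n with
  | zero => rfl
  | succ n ih => rw [pow_succ, Function.iterate_succ, ← ih]; rfl

theorem Set.encard_preimage_le_mul {α β : Type*} {π : α → β} {B : ℕ∞}
    (hπ : ∀ b, (π ⁻¹' {b}).encard ≤ B) {s : Set β} (hs : s.Finite) :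
    (π ⁻¹' s).encard ≤ s.encard * B := by
  rw [← hs.coe_toFinset, ← Finset.set_biUnion_preimage_singleton,
    encard_coe_eq_coe_finsetCard]
  calc (⋃ b ∈ hs.toFinset, π ⁻¹' {b}).encard ≤ ∑ b ∈ hs.toFinset, (π ⁻¹' {b}).encard :=
        Finset.set_encard_biUnion_le _ _
    _ ≤ hs.toFinset.card • B := Finset.sum_le_card_nsmul _ _ _ fun b _ => hπ b
    _ = hs.toFinset.card * B := nsmul_eq_mul _ _

/-- At most one point of each fiber lies in each member of a finite subcover of `K` by
injectivity domains. -/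
theorem IsLocallyInjective.exists_encard_inter_fiber_le {X Y : Type*} [TopologicalSpace X]
    {p : X → Y} (hp : IsLocallyInjective p) {K : Set X} (hK : IsCompact K) :
    ∃ N : ℕ, ∀ y, (K ∩ p ⁻¹' {y}).encard ≤ N := by
  choose U hUo hxU hUinj using hp
  obtain ⟨t, hKt⟩ := hK.elim_finite_subcover U hUo fun x _ => mem_iUnion.mpr ⟨x, hxU x⟩
  refine ⟨t.card, fun y => ?_⟩
  have hcover : K ∩ p ⁻¹' {y} ⊆ ⋃ x ∈ t, U x ∩ p ⁻¹' {y} := fun z ⟨hzK, hzy⟩ => by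
    obtain ⟨x, hx, hzx⟩ := mem_iUnion₂.mp (hKt hzK)
    exact mem_iUnion₂.mpr ⟨x, hx, hzx, hzy⟩
  have hsub : ∀ x, (U x ∩ p ⁻¹' {y}).encard ≤ 1 := fun x =>
    encard_le_one_iff_subsingleton.mpr fun a ha b hb =>
      hUinj x ha.1 hb.1 (ha.2.trans hb.2.symm)
  calc (K ∩ p ⁻¹' {y}).encard ≤ (⋃ x ∈ t, U x ∩ p ⁻¹' {y}).encard := encard_le_encard hcover
    _ ≤ ∑ x ∈ t, (U x ∩ p ⁻¹' {y}).encard := Finset.set_encard_biUnion_le _ _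
    _ ≤ t.card • 1 := Finset.sum_le_card_nsmul _ _ _ fun x _ => hsub x
    _ = t.card := by simp

theorem IsTopologicalHorseshoe.image {X X' : Type*} [TopologicalSpace X] [TopologicalSpace X']
    {F : X ≃ₜ X} {f : X' ≃ₜ X'} {p : X → X'} (hp : Continuous p)
    (hpF : Function.Semiconj p F f) {Δ : Set X} (hΔ : IsTopologicalHorseshoe F Δ)
    (hfib : ∃ N : ℕ, ∀ y, (Δ ∩ p ⁻¹' {y}).encard ≤ N) :
    IsTopologicalHorseshoe f (p '' Δ) := by
  obtain ⟨hΔc, q, hq, hinv, Y, tY, cY, t2Y, g, r, π₁, π₂, hr, hg, hπ₁c, hπ₁r, hπ₁g,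
    ⟨B, hB⟩, hπ₂c, hπ₂s, hπ₂g, hper⟩ := hΔ
  obtain ⟨N, hN⟩ := hfib
  have hpFq : Function.Semiconj p ⇑(F ^ q) ⇑(f ^ q) := by
    rw [Homeomorph.coe_pow_eq_iterate, Homeomorph.coe_pow_eq_iterate]
    exact hpF.iterate_right q
  refine ⟨hΔc.image hp, q, hq, ?_, Y, tY, cY, t2Y, g, r, p ∘ π₁, π₂, hr, hg, hp.comp hπ₁c,
    ?_, ?_, ⟨N * B, fun x => ?_⟩, hπ₂c, hπ₂s, hπ₂g, hper⟩
  · calc ⇑(f ^ q) '' (p '' Δ) = p '' (⇑(F ^ q) '' Δ) := by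
          simp only [image_image, hpFq.eq]
      _ = p '' Δ := by rw [hinv]
  · rw [range_comp, hπ₁r]
  · intro y
    simp only [Function.comp_apply, hπ₁g, hpFq.eq]
  · have hπ₁fib : ∀ e, (π₁ ⁻¹' {e}).encard ≤ B := fun e =>
      encard_le_coe_iff_finite_ncard_le.mpr (hB e)
    have hfin : (Δ ∩ p ⁻¹' {x}).Finite := finite_of_encard_le_coe (hN x)
    rw [← encard_le_coe_iff_finite_ncard_le, preimage_comp, ← preimage_inter_range, hπ₁r,
      inter_comm, Nat.cast_mul]
    calc (π₁ ⁻¹' (Δ ∩ p ⁻¹' {x})).encard ≤ (Δ ∩ p ⁻¹' {x}).encard * B :=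
          encard_preimage_le_mul hπ₁fib hfin
      _ ≤ N * B := by gcongr; exact hN x

theorem statement16_general {E S : Type*} [TopologicalSpace E] [TopologicalSpace S]
    (proj : E → S) (hproj : IsCoveringMap proj)
    (f : S ≃ₜ S) (F : E ≃ₜ E) (hcomm : ∀ e : E, proj (F e) = f (proj e))
    (hF : HasTopologicalHorseshoe F) :
    HasTopologicalHorseshoe f := by
  obtain ⟨Δ, hΔ⟩ := hF
  exact ⟨proj '' Δ, hΔ.image hproj.continuous hcomm
    (hproj.isLocalHomeomorph.isLocallyInjective.exists_encard_inter_fiber_le hΔ.1)⟩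

/-- If a homeomorphism lifting `f` through a covering map between locally compact Hausdorff
spaces has a topological horseshoe, then so does `f`. -/
theorem statement16 {E S : Type*} [TopologicalSpace E] [TopologicalSpace S]
    [LocallyCompactSpace E] [T2Space E] [LocallyCompactSpace S] [T2Space S]
    (proj : E → S) (hproj : IsCoveringMap proj)
    (f : S ≃ₜ S) (F : E ≃ₜ E) (hcomm : ∀ e : E, proj (F e) = f (proj e))
    (hF : HasTopologicalHorseshoe F) :
    HasTopologicalHorseshoe f :=
  statement16_general proj hproj f F hcomm hF
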